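/- arXiv:2511.17101 — 3 statements merged into one kernel-verified Lean document; each statement's English description precedes it below -/
import Mathlib

section
/- Let (C_n)_{n≥0} be a simple random walk on ℤ with C_0 = 0 (steps ±1 with probability 1/2 each). Define M_n = C_n - 2·min_{0≤i≤n} C_i. Then for every m ≥ 0 and n ≥ 1, P(M_n = m) = 2(m+1)²/(n+m+2) · P(C_n = m). -/
open MeasureTheory ProbabilityTheory

/-!
Write `p n e = P(C_n = e)` and `m_n = min_{k ≤ n} C_k`. Conditioning on the last step shows that
`P(C_n = e, m_n ≥ a)` satisfies the same recursion `f (n+1) e = (f n (e-1) + f n (e+1)) / 2` as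
`p n e - p n (2a - 2 - e)` on `e ≥ a - 1`, vanishes at `e = a - 1` like it, and agrees with it at
`n = 0` (for `a ≤ 1`); so the two coincide, which is the reflection principle. Differencing in `a`
gives `P(C_n = e, m_n = a) = p n (2a - e) - p n (2a - 2 - e)`. The event `M_n = m` splits according
to `m_n = -j` with `0 ≤ j ≤ m` and `C_n = m - 2j`, and each piece has probability
`p n m - p n (m + 2)`. Finally `(n + m + 2) p n (m + 2) = (n - m) p n m`, the ratio of consecutive
binomial coefficients.
-/

/-- `P(C_n = e)`, given by its one-step recursion instead of binomial coefficients. -/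
noncomputable def walkLaw : ℕ → ℤ → ℝ
  | 0, e => if e = 0 then 1 else 0
  | n + 1, e => (walkLaw n (e - 1) + walkLaw n (e + 1)) / 2

theorem walkLaw_neg (n : ℕ) (e : ℤ) : walkLaw n (-e) = walkLaw n e := by
  induction n generalizing e with
  | zero => simp [walkLaw]
  | succ n ih =>
    rw [walkLaw, walkLaw, ← ih (e + 1), ← ih (e - 1)]
    ring_nf

theorem walkLaw_add_two (n : ℕ) (m : ℤ) :
    ((n : ℝ) + m + 2) * walkLaw n (m + 2) = ((n : ℝ) - m) * walkLaw n m := by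
  induction n generalizing m with
  | zero =>
    by_cases hm : m = -2
    · simp [walkLaw, hm]
    · simp [walkLaw, show m + 2 ≠ 0 by omega]
  | succ n ih =>
    have h₁ := ih (m - 1)
    have h₂ := ih (m + 1)
    simp only [walkLaw]
    push_cast at h₁ h₂ ⊢
    ring_nf at h₁ h₂ ⊢
    linear_combination h₁ / 2 + h₂ / 2

structure IsRademacherSequence {Ω : Type*} [MeasurableSpace Ω] (X : ℕ → Ω → ℤ)
    (μ : Measure Ω) : Prop where
  measurable : ∀ i, Measurable (X i)
  indep : iIndepFun X μ
  prob_eq_one : ∀ i, μ {ω | X i ω = 1} = 1 / 2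
  prob_eq_neg_one : ∀ i, μ {ω | X i ω = -1} = 1 / 2

section Walk

variable {Ω : Type*} (X : ℕ → Ω → ℤ)

def walk (n : ℕ) (ω : Ω) : ℤ := ∑ i ∈ Finset.range n, X i ω

def walkMin (n : ℕ) (ω : Ω) : ℤ :=
  (Finset.range (n + 1)).inf' Finset.nonempty_range_add_one (walk X · ω)

@[simp] theorem walk_zero (ω : Ω) : walk X 0 ω = 0 := by simp [walk]

theorem walk_succ (n : ℕ) (ω : Ω) : walk X (n + 1) ω = walk X n ω + X n ω :=
  Finset.sum_range_succ _ _

@[simp] theorem walkMin_zero (ω : Ω) : walkMin X 0 ω = 0 := by simp [walkMin]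

theorem walkMin_succ (n : ℕ) (ω : Ω) :
    walkMin X (n + 1) ω = min (walkMin X n ω) (walk X (n + 1) ω) := by
  simp only [walkMin, Finset.range_add_one (n := n + 1)]
  rw [Finset.inf'_insert Finset.nonempty_range_add_one, inf_comm]

theorem walkMin_le_walk {n k : ℕ} (hk : k ≤ n) (ω : Ω) : walkMin X n ω ≤ walk X k ω :=
  Finset.inf'_le _ (Finset.mem_range_succ_iff.mpr hk)

theorem setOf_walk_sub_two_mul_walkMin_eq (n m : ℕ) :
    {ω | walk X n ω - 2 * walkMin X n ω = m}
      = ⋃ j ∈ Finset.range (m + 1), {ω | walk X n ω = m - 2 * j ∧ walkMin X n ω = -j} := by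
  ext ω
  have hmin₀ := walkMin_le_walk X (Nat.zero_le n) ω
  have hminₙ := walkMin_le_walk X (le_refl n) ω
  rw [walk_zero] at hmin₀
  simp only [Set.mem_iUnion, Finset.mem_range, Set.mem_ofPred_eq, exists_prop]
  constructor
  · intro h
    exact ⟨(-walkMin X n ω).toNat, by omega, by omega, by omega⟩
  · rintro ⟨j, -, hw, hmin⟩
    omega

abbrev stepsBefore (n : ℕ) : MeasurableSpace Ω :=
  ⨆ i ∈ Set.Iio n, MeasurableSpace.comap (X i) inferInstance

theorem measurable_walk_stepsBefore {n k : ℕ} (hk : k ≤ n) :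
    Measurable[stepsBefore X n] (walk X k) := by
  refine Finset.measurable_sum _ fun i hi => ?_
  exact (comap_measurable (X i)).mono
    (le_iSup₂_of_le i (lt_of_lt_of_le (Finset.mem_range.mp hi) hk) le_rfl) le_rfl

theorem measurable_walkMin_stepsBefore {n N : ℕ} (hn : n ≤ N) :
    Measurable[stepsBefore X N] (walkMin X n) := by
  induction n with
  | zero => rw [funext (walkMin_zero X)]; exact measurable_const
  | succ n ih =>
    rw [funext (walkMin_succ X n)]
    exact (ih (by omega)).min (measurable_walk_stepsBefore X hn)

theorem measurableSet_walk_eq_walkMin_ge_stepsBefore (n : ℕ) (e a : ℤ) :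
    MeasurableSet[stepsBefore X n] {ω | walk X n ω = e ∧ a ≤ walkMin X n ω} :=
  (measurable_walk_stepsBefore X le_rfl (measurableSet_singleton e)).inter
    (measurable_walkMin_stepsBefore X le_rfl measurableSet_Ici)

variable [MeasurableSpace Ω] {μ : Measure Ω}

theorem stepsBefore_le (hmeas : ∀ i, Measurable (X i)) (n : ℕ) :
    stepsBefore X n ≤ ‹MeasurableSpace Ω› :=
  iSup₂_le fun i _ => (hmeas i).comap_le

theorem measureReal_inter_step_eq_mul (hmeas : ∀ i, Measurable (X i)) (hindep : iIndepFun X μ)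
    {n : ℕ} {T : Set Ω} (hT : MeasurableSet[stepsBefore X n] T) (ε : ℤ) :
    μ.real (T ∩ {ω | X n ω = ε}) = μ.real T * μ.real {ω | X n ω = ε} := by
  have hindep_step : Indep (stepsBefore X n) (⨆ i ∈ ({n} : Set ℕ), .comap (X i) inferInstance) μ :=
    indep_iSup_of_disjoint (fun i => (hmeas i).comap_le)
      ((iIndepFun_iff_iIndep _ _ _).mp hindep) (by simp)
  have hstep : MeasurableSet[⨆ i ∈ ({n} : Set ℕ), .comap (X i) inferInstance] {ω | X n ω = ε} :=
    le_iSup₂ (f := fun i (_ : i ∈ ({n} : Set ℕ)) => MeasurableSpace.comap (X i) inferInstance)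
      n rfl _ ⟨{ε}, measurableSet_singleton ε, rfl⟩
  simp only [measureReal_def, (Indep_iff _ _ μ).mp hindep_step T _ hT hstep, ENNReal.toReal_mul]

variable [IsProbabilityMeasure μ] {X}

theorem IsRademacherSequence.measureReal_eq_half_add_half (hX : IsRademacherSequence X μ)
    {n : ℕ} {S T₁ T₂ : Set Ω} (hT₁ : MeasurableSet[stepsBefore X n] T₁)
    (hT₂ : MeasurableSet[stepsBefore X n] T₂)
    (h₁ : S ∩ {ω | X n ω = 1} = T₁ ∩ {ω | X n ω = 1})
    (h₂ : S ∩ {ω | X n ω = -1} = T₂ ∩ {ω | X n ω = -1}) :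
    μ.real S = (μ.real T₁ + μ.real T₂) / 2 := by
  have hm (ε : ℤ) : MeasurableSet {ω | X n ω = ε} := hX.measurable n (measurableSet_singleton ε)
  have hdisj : Disjoint {ω | X n ω = 1} {ω | X n ω = -1} :=
    Set.disjoint_left.mpr fun ω h1 h2 => by simp_all
  have hpm : μ ({ω | X n ω = 1} ∪ {ω | X n ω = -1})ᶜ = 0 := by
    rw [prob_compl_eq_zero_iff ((hm 1).union (hm (-1))), measure_union hdisj (hm _),
      hX.prob_eq_one, hX.prob_eq_neg_one, ENNReal.add_halves]
  have hT₂' : MeasurableSet (S ∩ {ω | X n ω = -1}) :=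
    h₂ ▸ (stepsBefore_le X hX.measurable n _ hT₂).inter (hm _)
  have hhalf (ε : ℤ) (hε : μ {ω | X n ω = ε} = 1 / 2) : μ.real {ω | X n ω = ε} = 1 / 2 := by
    simp [measureReal_def, hε]
  calc μ.real S = μ.real (S ∩ ({ω | X n ω = 1} ∪ {ω | X n ω = -1})) := by
        simp only [measureReal_def, measure_inter_conull hpm]
    _ = μ.real (T₁ ∩ {ω | X n ω = 1}) + μ.real (T₂ ∩ {ω | X n ω = -1}) := by
        rw [Set.inter_union_distrib_left, measureReal_union
          (hdisj.mono Set.inter_subset_right Set.inter_subset_right) hT₂', h₁, h₂]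
    _ = (μ.real T₁ + μ.real T₂) / 2 := by
        rw [measureReal_inter_step_eq_mul X hX.measurable hX.indep hT₁,
          measureReal_inter_step_eq_mul X hX.measurable hX.indep hT₂,
          hhalf 1 (hX.prob_eq_one n), hhalf (-1) (hX.prob_eq_neg_one n)]
        ring

theorem IsRademacherSequence.measureReal_walk_eq (hX : IsRademacherSequence X μ) (n : ℕ) (e : ℤ) :
    μ.real {ω | walk X n ω = e} = walkLaw n e := by
  induction n generalizing e with
  | zero => by_cases he : e = 0 <;> simp [he, walkLaw, eq_comm (a := (0 : ℤ))]
  | succ n ih =>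
    rw [walkLaw, ← ih, ← ih]
    refine hX.measureReal_eq_half_add_half
      (measurable_walk_stepsBefore X le_rfl (measurableSet_singleton _))
      (measurable_walk_stepsBefore X le_rfl (measurableSet_singleton _)) ?_ ?_ <;>
    · ext ω
      simp only [Set.mem_inter_iff, Set.mem_ofPred_eq, walk_succ]
      omega

theorem IsRademacherSequence.measureReal_walk_eq_walkMin_ge (hX : IsRademacherSequence X μ)
    (n : ℕ) {a e : ℤ} (ha : a ≤ 1) (he : a - 1 ≤ e) :
    μ.real {ω | walk X n ω = e ∧ a ≤ walkMin X n ω} = walkLaw n e - walkLaw n (2 * a - 2 - e) := by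
  induction n generalizing e with
  | zero =>
    simp only [walk_zero, walkMin_zero, walkLaw]
    by_cases h : 0 = e ∧ a ≤ 0
    · obtain ⟨rfl, ha⟩ := h
      simp [ha, show 2 * a - 2 ≠ 0 by omega]
    · have hempty : {ω : Ω | 0 = e ∧ a ≤ 0} = ∅ := Set.eq_empty_of_forall_notMem fun _ => h
      rw [hempty, measureReal_empty]
      split_ifs <;> first | omega | norm_num
  | succ n ih =>
    rcases he.eq_or_lt with rfl | he
    · have hempty : {ω | walk X (n + 1) ω = a - 1 ∧ a ≤ walkMin X (n + 1) ω} = ∅ :=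
        Set.eq_empty_of_forall_notMem fun ω ⟨hw, hmin⟩ => by
          have := walkMin_le_walk X (le_refl (n + 1)) ω
          omega
      rw [hempty, measureReal_empty, show 2 * a - 2 - (a - 1) = a - 1 by ring, sub_self]
    · rw [hX.measureReal_eq_half_add_half
          (measurableSet_walk_eq_walkMin_ge_stepsBefore X n (e - 1) a)
          (measurableSet_walk_eq_walkMin_ge_stepsBefore X n (e + 1) a),
        ih (by omega), ih (by omega), walkLaw, walkLaw]
      · ring_nf
      all_goals
        ext ω
        simp only [Set.mem_inter_iff, Set.mem_ofPred_eq, walk_succ, walkMin_succ, le_min_iff]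
        omega

theorem IsRademacherSequence.measureReal_walk_eq_walkMin_eq (hX : IsRademacherSequence X μ)
    (n : ℕ) {a e : ℤ} (ha : a ≤ 0) (he : a ≤ e) :
    μ.real {ω | walk X n ω = e ∧ walkMin X n ω = a}
      = walkLaw n (2 * a - e) - walkLaw n (2 * a - 2 - e) := by
  have hdiff : {ω | walk X n ω = e ∧ walkMin X n ω = a}
      = {ω | walk X n ω = e ∧ a ≤ walkMin X n ω}
        \ {ω | walk X n ω = e ∧ a + 1 ≤ walkMin X n ω} := by
    ext ω
    simp only [Set.mem_sdiff, Set.mem_ofPred_eq]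
    omega
  have hsub : {ω | walk X n ω = e ∧ a + 1 ≤ walkMin X n ω}
      ⊆ {ω | walk X n ω = e ∧ a ≤ walkMin X n ω} := fun ω hω => ⟨hω.1, by have := hω.2; omega⟩
  rw [hdiff, measureReal_sdiff hsub
      (stepsBefore_le X hX.measurable n _ (measurableSet_walk_eq_walkMin_ge_stepsBefore X n e _)),
    hX.measureReal_walk_eq_walkMin_ge n (by omega) (by omega),
    hX.measureReal_walk_eq_walkMin_ge n (by omega) (by omega)]
  ring_nf

theorem IsRademacherSequence.measureReal_walk_sub_two_mul_walkMin_eq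
    (hX : IsRademacherSequence X μ) (n m : ℕ) :
    μ.real {ω | walk X n ω - 2 * walkMin X n ω = m}
      = (m + 1) * (walkLaw n m - walkLaw n (m + 2)) := by
  have hdisj : Set.PairwiseDisjoint (Finset.range (m + 1) : Set ℕ)
      fun j : ℕ => {ω | walk X n ω = m - 2 * j ∧ walkMin X n ω = -j} :=
    fun i _ j _ hij => Set.disjoint_left.mpr fun ω hi hj => hij (by simp_all)
  have hmeas (j : ℕ) : MeasurableSet {ω | walk X n ω = m - 2 * j ∧ walkMin X n ω = -j} :=
    stepsBefore_le X hX.measurable n _ <|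
      (measurable_walk_stepsBefore X le_rfl (measurableSet_singleton _)).inter
        (measurable_walkMin_stepsBefore X le_rfl (measurableSet_singleton _))
  rw [setOf_walk_sub_two_mul_walkMin_eq, measureReal_biUnion_finset hdisj fun j _ => hmeas j]
  calc ∑ j ∈ Finset.range (m + 1), μ.real {ω | walk X n ω = m - 2 * j ∧ walkMin X n ω = -j}
      = ∑ j ∈ Finset.range (m + 1), (walkLaw n m - walkLaw n (m + 2)) := by
        refine Finset.sum_congr rfl fun j hj => ?_
        have := Finset.mem_range.mp hj
        rw [hX.measureReal_walk_eq_walkMin_eq n (by omega) (by omega),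
          ← walkLaw_neg n m, ← walkLaw_neg n (m + 2)]
        ring_nf
    _ = (m + 1) * (walkLaw n m - walkLaw n (m + 2)) := by
        rw [Finset.sum_const, Finset.card_range, nsmul_eq_mul]
        push_cast
        ring

end Walk

/-- for a simple random walk `C` on `ℤ` with `C_0 = 0` (i.i.d. `±1` steps
`X`), setting `M_n = C_n - 2 min_{0≤i≤n} C_i`, one has
`P(M_n = m) = 2(m+1)²/(n+m+2) · P(C_n = m)` for all `m ≥ 0`, `n ≥ 1`. -/
theorem stmt7 {Ω : Type*} [MeasurableSpace Ω] (μ : Measure Ω) [IsProbabilityMeasure μ]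
    (X : ℕ → Ω → ℤ) (hmeas : ∀ i, Measurable (X i))
    (hindep : iIndepFun X μ)
    (hlaw : ∀ i, μ {ω | X i ω = 1} = 1 / 2 ∧ μ {ω | X i ω = -1} = 1 / 2)
    (C : ℕ → Ω → ℤ) (hC : ∀ n ω, C n ω = ∑ i ∈ Finset.range n, X i ω)
    (M : ℕ → Ω → ℤ)
    (hM : ∀ n ω, M n ω
      = C n ω - 2 * ((Finset.range (n + 1)).inf' Finset.nonempty_range_add_one
          (fun i => C i ω))) :
    ∀ (n m : ℕ), 1 ≤ n →
      (μ {ω | M n ω = (m : ℤ)}).toReal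
        = 2 * ((m : ℝ) + 1) ^ 2 / ((n : ℝ) + (m : ℝ) + 2)
          * (μ {ω | C n ω = (m : ℤ)}).toReal := by
  intro n m _
  have hX : IsRademacherSequence X μ :=
    ⟨hmeas, hindep, fun i => (hlaw i).1, fun i => (hlaw i).2⟩
  obtain rfl : C = walk X := funext₂ hC
  have hMn : {ω | M n ω = (m : ℤ)} = {ω | walk X n ω - 2 * walkMin X n ω = m} := by
    ext ω
    rw [Set.mem_ofPred_eq, Set.mem_ofPred_eq, hM]
    rfl
  rw [← measureReal_def, ← measureReal_def, hMn, hX.measureReal_walk_sub_two_mul_walkMin_eq,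
    hX.measureReal_walk_eq]
  have hratio := walkLaw_add_two n m
  push_cast at hratio
  field_simp
  linear_combination -hratio
end

section
/- Let a ≥ 0 and let Γ_m, for integers m ≥ 1, be nonnegative reals bounded above by a fixed constant B ≥ 1, such that for some λ > 0 and all m ≥ 1, Γ_m ≤ λ m² √(Γ_{2m}). Then there is a universal constant c'' > 0 such that Γ_1 ≤ c'' · λ². -/
/-! Along the dyadic subsequence `x k = Γ (2 ^ k)` the hypothesis squares to
`x k ^ 2 ≤ λ² 16^k x (k+1)`. After the normalization `y k = x k / (λ² 16^(k+1))` this reads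
`y k ^ 2 ≤ y (k+1)`, so `y 0 ^ (2 ^ k) ≤ y k ≤ B / λ²` for all `k`; a bounded sequence of
iterated squares forces `y 0 ≤ 1`, i.e. `Γ 1 ≤ 16 λ²`. -/

lemma pow_two_pow_le_of_sq_le_succ {y : ℕ → ℝ} (hy0 : 0 ≤ y 0)
    (hy : ∀ k, y k ^ 2 ≤ y (k + 1)) (k : ℕ) : y 0 ^ 2 ^ k ≤ y k := by
  induction k with
  | zero => simp
  | succ k ih =>
    calc y 0 ^ 2 ^ (k + 1) = (y 0 ^ 2 ^ k) ^ 2 := by rw [pow_succ, pow_mul]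
      _ ≤ y k ^ 2 := by gcongr
      _ ≤ y (k + 1) := hy k

lemma le_one_of_pow_two_pow_le {y C : ℝ} (h : ∀ k, y ^ 2 ^ k ≤ C) : y ≤ 1 := by
  by_contra! hy
  obtain ⟨n, hn⟩ := pow_unbounded_of_one_lt C hy
  have : y ^ n ≤ y ^ 2 ^ n := pow_le_pow_right₀ hy.le Nat.lt_two_pow_self.le
  linarith [h n]

lemma le_mul_of_sq_le_mul_pow_mul_succ {x : ℕ → ℝ} {a b B : ℝ} (ha : 0 < a) (hb : 1 ≤ b)
    (hx0 : ∀ k, 0 ≤ x k) (hxB : ∀ k, x k ≤ B)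
    (hx : ∀ k, x k ^ 2 ≤ a * b ^ k * x (k + 1)) : x 0 ≤ a * b := by
  have hc : ∀ k, 0 < a * b ^ (k + 1) := fun k => by positivity
  set y : ℕ → ℝ := fun k => x k / (a * b ^ (k + 1)) with hy_def
  have hy : ∀ k, y k ^ 2 ≤ y (k + 1) := fun k => by
    simp only [hy_def, div_pow, div_le_div_iff₀ (pow_pos (hc k) 2) (hc (k + 1))]
    calc x k ^ 2 * (a * b ^ (k + 1 + 1))
        ≤ a * b ^ k * x (k + 1) * (a * b ^ (k + 1 + 1)) := by gcongr; exact hx k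
      _ = x (k + 1) * (a * b ^ (k + 1)) ^ 2 := by ring
  have hyB : ∀ k, y k ≤ B / a := fun k => by
    calc y k ≤ B / (a * b ^ (k + 1)) := div_le_div_of_nonneg_right (hxB k) (hc k).le
      _ ≤ B / a := div_le_div_of_nonneg_left ((hx0 k).trans (hxB k)) ha
          (le_mul_of_one_le_right ha.le (one_le_pow₀ hb))
  have hy0 : y 0 ≤ 1 := le_one_of_pow_two_pow_le fun k =>
    (pow_two_pow_le_of_sq_le_succ (div_nonneg (hx0 0) (hc 0).le) hy k).trans (hyB k)
  have hab : 0 < a * b := by simpa using hc 0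
  simpa only [hy_def, zero_add, pow_one, div_le_one hab] using hy0

/-- bootstrap lemma. There is a universal constant `c'' > 0` such that
whenever `(Γ_m)_{m≥1}` are nonnegative reals bounded by some `B ≥ 1` and satisfy
`Γ_m ≤ λ m² √(Γ_{2m})` for all `m ≥ 1` (with `λ > 0`), one has `Γ_1 ≤ c'' λ²`. -/
theorem stmt16 :
    ∃ c'' : ℝ, 0 < c'' ∧
      ∀ (B lam : ℝ) (Γ : ℕ → ℝ), 1 ≤ B → 0 < lam →
        (∀ m : ℕ, 1 ≤ m → 0 ≤ Γ m ∧ Γ m ≤ B) →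
        (∀ m : ℕ, 1 ≤ m → Γ m ≤ lam * (m : ℝ) ^ 2 * Real.sqrt (Γ (2 * m))) →
        Γ 1 ≤ c'' * lam ^ 2 := by
  refine ⟨16, by norm_num, fun B lam Γ _ hlam hΓ hrec => ?_⟩
  have hΓ' : ∀ k, 0 ≤ Γ (2 ^ k) ∧ Γ (2 ^ k) ≤ B := fun k => hΓ _ Nat.one_le_two_pow
  have hsq : ∀ k, Γ (2 ^ k) ^ 2 ≤ lam ^ 2 * 16 ^ k * Γ (2 ^ (k + 1)) := fun k => by
    calc Γ (2 ^ k) ^ 2 ≤ (lam * ((2 ^ k : ℕ) : ℝ) ^ 2 * √(Γ (2 * 2 ^ k))) ^ 2 := by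
          gcongr
          exacts [(hΓ' k).1, hrec _ Nat.one_le_two_pow]
      _ = lam ^ 2 * 16 ^ k * Γ (2 ^ (k + 1)) := by
          rw [← pow_succ', mul_pow, Real.sq_sqrt (hΓ' (k + 1)).1]
          push_cast
          have h16 : (16 : ℝ) ^ k = ((2 : ℝ) ^ k) ^ 4 := by
            rw [← pow_mul, mul_comm, pow_mul]; norm_num
          rw [h16]
          ring
  simpa only [pow_zero, mul_comm (16 : ℝ)] using
    le_mul_of_sq_le_mul_pow_mul_succ (pow_pos hlam 2) (by norm_num : (1 : ℝ) ≤ 16)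
      (fun k => (hΓ' k).1) (fun k => (hΓ' k).2) hsq
end

section
/- Let (Y_n)_{n≥1} be a nondecreasing sequence of nonnegative random variables with Y_n ≤ n. Suppose there exist a constant λ > 0 and, for every ε ∈ (0,1), an n_0 such that for all n ≥ n_0: E[Y_{⌊(1+2λ)n⌋ + ⌊2√n⌋}] - E[Y_{⌊(1+2λ)n⌋ - ⌊2√n⌋}] < 2ε(1+2λ)√n. Then limsup_{n→∞} E[Y_n]/n = 0. -/
/-!
Write `g n = E[Y_n]`, a nondecreasing sequence, and `L = 1 + 2λ`. For `m` large put
`n = ⌊m / L⌋`: the window `[⌊Ln⌋ - ⌊2√n⌋, ⌊Ln⌋ + ⌊2√n⌋]` then contains `m` and its left end lies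
at least `√n` below `m`. Hence `g m` exceeds `g` at a point `√n` further left by at most `c √n`,
and strong induction on `m` gives `g m ≤ g M + c m` for a fixed `M`. Since `c = 2εL` is arbitrary,
`g m / m → 0`.
-/

open MeasureTheory Filter Topology Real

lemma le_floor_mul_add_floor_two_mul_sqrt {L : ℝ} {m n : ℕ} (hm : m < L * (n + 1))
    (hn : L + 2 ≤ 2 * √n) : m ≤ ⌊L * n⌋₊ + ⌊2 * √n⌋₊ := by
  have h₁ := Nat.lt_floor_add_one (L * n)
  have h₂ := Nat.lt_floor_add_one (2 * √n)
  have : (m : ℝ) < ⌊L * n⌋₊ + ⌊2 * √n⌋₊ + 1 := by linarith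
  exact Nat.lt_succ_iff.1 (by exact_mod_cast this)

lemma floor_mul_sub_floor_two_mul_sqrt_add_sqrt_le {L : ℝ} {m n : ℕ} (hm : L * n ≤ m)
    (h₁ : 1 ≤ √n) (h₂ : 2 ≤ L * √n) : ((⌊L * n⌋₊ - ⌊2 * √n⌋₊ : ℕ) : ℝ) + √n ≤ m := by
  have hLn : 2 * √n ≤ L * n := by
    calc 2 * √n ≤ L * √n * √n := by nlinarith
      _ = L * n := by rw [mul_assoc, mul_self_sqrt n.cast_nonneg]
  rw [Nat.cast_sub (Nat.floor_mono hLn)]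
  have := Nat.floor_le (show 0 ≤ L * n by linarith [sqrt_nonneg (n : ℝ)])
  have := Nat.lt_floor_add_one (2 * √n)
  linarith

theorem exists_le_add_mul_of_window_increment {g : ℕ → ℝ} (hg : Monotone g) {L c : ℝ}
    (hL : 0 < L) (hc : 0 ≤ c)
    (hinc : ∀ᶠ n : ℕ in atTop,
      g (⌊L * n⌋₊ + ⌊2 * √n⌋₊) - g (⌊L * n⌋₊ - ⌊2 * √n⌋₊) ≤ c * √n) :
    ∃ M, ∀ m, g m ≤ g M + c * m := by
  have hsqrt : Tendsto (fun n : ℕ => √(n : ℝ)) atTop atTop :=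
    tendsto_sqrt_atTop.comp tendsto_natCast_atTop_atTop
  have hgood : ∀ᶠ n : ℕ in atTop,
      (g (⌊L * n⌋₊ + ⌊2 * √n⌋₊) - g (⌊L * n⌋₊ - ⌊2 * √n⌋₊) ≤ c * √n) ∧
        1 ≤ √n ∧ L + 2 ≤ 2 * √n ∧ 2 ≤ L * √n :=
    hinc.and <| (hsqrt.eventually_ge_atTop 1).and <|
      ((hsqrt.const_mul_atTop two_pos).eventually_ge_atTop _).and
        ((hsqrt.const_mul_atTop hL).eventually_ge_atTop _)
  have hfloor : Tendsto (fun m : ℕ => ⌊(m : ℝ) / L⌋₊) atTop atTop :=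
    tendsto_nat_floor_atTop.comp (tendsto_natCast_atTop_atTop.atTop_div_const hL)
  obtain ⟨M, hM⟩ := eventually_atTop.1 (hfloor.eventually hgood)
  refine ⟨M, fun m => ?_⟩
  induction m using Nat.strong_induction_on with
  | _ m ih =>
  rcases le_or_gt m M with hmM | hMm
  · have := hg hmM
    have : 0 ≤ c * m := by positivity
    linarith
  obtain ⟨hwin, h₁, h₂, h₃⟩ := hM m hMm.le
  set n := ⌊(m : ℝ) / L⌋₊
  have hLn : L * n ≤ m := by
    rw [mul_comm, ← le_div_iff₀ hL]
    exact Nat.floor_le (div_nonneg m.cast_nonneg hL.le)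
  have hmn : m < L * (n + 1) := by
    rw [mul_comm, ← div_lt_iff₀ hL]
    exact Nat.lt_floor_add_one _
  have hleft := floor_mul_sub_floor_two_mul_sqrt_add_sqrt_le hLn h₁ h₃
  have hleft_lt : ⌊L * n⌋₊ - ⌊2 * √n⌋₊ < m := by
    have : ((⌊L * n⌋₊ - ⌊2 * √n⌋₊ : ℕ) : ℝ) < m := by linarith
    exact_mod_cast this
  have := ih _ hleft_lt
  have := mul_le_mul_of_nonneg_left hleft hc
  calc g m ≤ g (⌊L * n⌋₊ + ⌊2 * √n⌋₊) := hg (le_floor_mul_add_floor_two_mul_sqrt hmn h₂)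
    _ ≤ g M + c * m := by linarith

theorem tendsto_div_of_forall_exists_le_add_mul {g : ℕ → ℝ} (hg : Monotone g)
    (h : ∀ c : ℝ, 0 < c → ∃ M, ∀ m, g m ≤ g M + c * m) :
    Tendsto (fun n : ℕ => g n / n) atTop (𝓝 0) := by
  refine tendsto_order.2 ⟨fun a ha => ?_, fun δ hδ => ?_⟩
  · filter_upwards [(tendsto_const_div_atTop_nhds_zero_nat (g 0)).eventually (lt_mem_nhds ha)]
      with n hn
    exact hn.trans_le (div_le_div_of_nonneg_right (hg n.zero_le) n.cast_nonneg)
  · obtain ⟨M, hM⟩ := h (δ / 2) (half_pos hδ)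
    filter_upwards [(tendsto_const_div_atTop_nhds_zero_nat (g M)).eventually
      (gt_mem_nhds (half_pos hδ)), eventually_gt_atTop 0] with n hn hn₀
    have hn₀ : (0 : ℝ) < n := by exact_mod_cast hn₀
    calc g n / n ≤ (g M + δ / 2 * n) / n := div_le_div_of_nonneg_right (hM n) hn₀.le
      _ = g M / n + δ / 2 := by field_simp
      _ < δ := by linarith

theorem stmt18_general {Ω : Type*} [MeasurableSpace Ω] (μ : Measure Ω) [IsProbabilityMeasure μ]
    (Y : ℕ → Ω → ℝ) (lam : ℝ) (hlam : 0 < lam)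
    (hint : ∀ n, Integrable (Y n) μ)
    (hmono : ∀ n ω, Y n ω ≤ Y (n + 1) ω)
    (hinc : ∀ ε : ℝ, 0 < ε → ε < 1 → ∃ n₀ : ℕ, ∀ n : ℕ, n₀ ≤ n →
      (∫ ω, Y (⌊(1 + 2 * lam) * n⌋₊ + ⌊2 * Real.sqrt n⌋₊) ω ∂μ)
          - (∫ ω, Y (⌊(1 + 2 * lam) * n⌋₊ - ⌊2 * Real.sqrt n⌋₊) ω ∂μ)
        < 2 * ε * (1 + 2 * lam) * Real.sqrt n) :
    limsup (fun n : ℕ => (∫ ω, Y n ω ∂μ) / n) atTop = 0 := by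
  have hg : Monotone fun n => ∫ ω, Y n ω ∂μ :=
    monotone_nat_of_le_succ fun n => integral_mono (hint n) (hint (n + 1)) (hmono n)
  have hL : 0 < 1 + 2 * lam := by linarith
  refine (tendsto_div_of_forall_exists_le_add_mul hg fun c hc => ?_).limsup_eq
  set ε := min (c / (2 * (1 + 2 * lam))) (1 / 2)
  have hε : 2 * ε * (1 + 2 * lam) ≤ c := by
    have := min_le_left (c / (2 * (1 + 2 * lam))) (1 / 2)
    rw [le_div_iff₀ (by positivity)] at this
    linarith
  obtain ⟨n₀, hn₀⟩ :=
    hinc ε (by positivity) (by linarith [min_le_right (c / (2 * (1 + 2 * lam))) (1 / 2)])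
  refine exists_le_add_mul_of_window_increment hg hL hc.le (eventually_atTop.2 ⟨n₀, fun n hn => ?_⟩)
  exact (hn₀ n hn).le.trans (mul_le_mul_of_nonneg_right hε (sqrt_nonneg _))

/-- if `(Y_n)` is a nondecreasing sequence of nonnegative random variables
with `Y_n ≤ n`, and for every `ε ∈ (0,1)` and all large `n` the expectation increment
`E[Y_{⌊(1+2λ)n⌋+⌊2√n⌋}] - E[Y_{⌊(1+2λ)n⌋-⌊2√n⌋}] < 2ε(1+2λ)√n`, then
`limsup E[Y_n]/n = 0`. -/
theorem stmt18 {Ω : Type*} [MeasurableSpace Ω] (μ : Measure Ω) [IsProbabilityMeasure μ]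
    (Y : ℕ → Ω → ℝ) (lam : ℝ) (hlam : 0 < lam)
    (hint : ∀ n, Integrable (Y n) μ)
    (hnn : ∀ n ω, 0 ≤ Y n ω)
    (hmono : ∀ n ω, Y n ω ≤ Y (n + 1) ω)
    (hbd : ∀ n ω, Y n ω ≤ n)
    (hinc : ∀ ε : ℝ, 0 < ε → ε < 1 → ∃ n₀ : ℕ, ∀ n : ℕ, n₀ ≤ n →
      (∫ ω, Y (⌊(1 + 2 * lam) * n⌋₊ + ⌊2 * Real.sqrt n⌋₊) ω ∂μ)
          - (∫ ω, Y (⌊(1 + 2 * lam) * n⌋₊ - ⌊2 * Real.sqrt n⌋₊) ω ∂μ)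
        < 2 * ε * (1 + 2 * lam) * Real.sqrt n) :
    limsup (fun n : ℕ => (∫ ω, Y n ω ∂μ) / n) atTop = 0 :=
  stmt18_general μ Y lam hlam hint hmono hinc
end
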